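/- arXiv:1208.3347 — 5 statements merged into one kernel-verified Lean document; each statement's English description precedes it below -/
import Mathlib

section
/- Let R be a commutative ring with a group homomorphism χ : ℤ_p → Rˣ and an injective ring endomorphism φ : R → R satisfying φ(χ(x)) = χ(p·x) for all x ∈ ℤ_p and R = ⨁_{i=0}^{p-1} χ(i)·φ(R) (internal direct sum as φ(R)-modules). Then for every positive integer c, R = ⨁_{i=0}^{p^c-1} χ(i)·φ^c(R). -/
/-!
Write `R = ⨁_{i<p} χ(i) φ(R)` and, inductively, `R = ⨁_{j<p^c} χ(j) φ^c(R)`. Substituting the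
second decomposition into each summand `φ(R)` of the first gives
`R = ⨁_{i,j} χ(i) φ(χ(j)) φ^{c+1}(R) = ⨁_{i,j} χ(i + p j) φ^{c+1}(R)`,
and `(j, i) ↦ i + p j` is a bijection `[0, p^c) × [0, p) → [0, p^{c+1})`.
-/

open Function

/-- The internal direct sum decomposition `R = ⨁ i, a i • θ(R)`. -/
def HasUniqueExpansion {R ι : Type*} [Semiring R] [Fintype ι] (a : ι → R) (θ : R → R) : Prop :=
  ∀ r : R, ∃! f : ι → R, r = ∑ i, a i * θ (f i)

namespace HasUniqueExpansion

variable {R ι κ : Type*} [Semiring R] [Fintype ι] [Fintype κ]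

theorem one_id [Unique ι] : HasUniqueExpansion (fun _ : ι => (1 : R)) id := by
  intro r
  refine ⟨fun _ => r, by simp, fun g hg => funext fun i => ?_⟩
  rw [Subsingleton.elim i default]
  simpa using hg.symm

theorem comp_equiv {a : ι → R} {θ : R → R} (h : HasUniqueExpansion a θ) (e : κ ≃ ι) :
    HasUniqueExpansion (a ∘ e) θ := by
  intro r
  obtain ⟨f, hf, hf_unique⟩ := h r
  refine ⟨f ∘ e, by simpa [e.sum_comp (fun i => a i * θ (f i))] using hf, fun g hg => ?_⟩
  have : g ∘ e.symm = f := hf_unique _ <| by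
    rw [hg, ← e.symm.sum_comp]
    simp
  rw [← this]
  ext k
  simp

/-- Substituting an expansion along `θ` into each summand of an expansion along `ψ`. -/
theorem subst {a : ι → R} {b : κ → R} {ψ : R →+* R} {θ : R → R}
    (ha : HasUniqueExpansion a ψ) (hb : HasUniqueExpansion b θ) :
    HasUniqueExpansion (fun x : κ × ι => a x.2 * ψ (b x.1)) (ψ ∘ θ) := by
  have sum_eq : ∀ h : κ × ι → R, ∑ x, a x.2 * ψ (b x.1) * (ψ ∘ θ) (h x)
      = ∑ i, a i * ψ (∑ j, b j * θ (h (j, i))) := by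
    intro h
    rw [Fintype.sum_prod_type_right]
    simp only [map_sum, map_mul, Finset.mul_sum, comp_apply, mul_assoc]
  intro r
  obtain ⟨f, hf, hf_unique⟩ := ha r
  choose g hg hg_unique using fun i => hb (f i)
  refine ⟨fun x => g x.2 x.1, ?_, fun h hh => ?_⟩
  · dsimp only
    rw [sum_eq, hf]
    simp only [← hg]
  · have inner_eq : (fun i => ∑ j, b j * θ (h (j, i))) = f := hf_unique _ (by
      dsimp only at hh ⊢
      rwa [← sum_eq])
    ext ⟨j, i⟩
    exact congrFun (hg_unique i (fun j => h (j, i)) (congrFun inner_eq i).symm) j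

end HasUniqueExpansion

theorem natCast_finProdFinEquiv_pow_succ {p : ℕ} [Fact p.Prime] {c : ℕ} (x : Fin (p ^ c) × Fin p) :
    (((finProdFinEquiv.trans (finCongr (pow_succ p c).symm) x : Fin (p ^ (c + 1))) : ℕ) : ℤ_[p])
      = ((x.2 : ℕ) : ℤ_[p]) + p * ((x.1 : ℕ) : ℤ_[p]) := by
  simp [finProdFinEquiv_apply_val]

theorem stmt0_general (p : ℕ) [Fact p.Prime] (R : Type*) [CommRing R]
    (χ : ℤ_[p] → Rˣ) (hχ : ∀ x y : ℤ_[p], χ (x + y) = χ x * χ y)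
    (φ : R →+* R)
    (hcompat : ∀ x : ℤ_[p], φ ((χ x : R)) = ((χ ((p : ℤ_[p]) * x) : R)))
    (hdirect : ∀ r : R, ∃! f : Fin p → R,
      r = ∑ i : Fin p, ((χ (((i : ℕ) : ℤ_[p])) : R)) * φ (f i))
    (c : ℕ) :
    ∀ r : R, ∃! f : Fin (p ^ c) → R,
      r = ∑ i : Fin (p ^ c), ((χ (((i : ℕ) : ℤ_[p])) : R)) * (⇑φ)^[c] (f i) := by
  have hχ_zero : (χ 0 : R) = 1 := by
    have h := hχ 0 0
    rw [add_zero, left_eq_mul] at h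
    rw [h, Units.val_one]
  change HasUniqueExpansion (fun k : Fin (p ^ c) => (χ ((k : ℕ) : ℤ_[p]) : R)) φ^[c]
  induction c with
  | zero =>
    have : Unique (Fin (p ^ 0)) := Fin.instUnique
    have coeff_eq (k : Fin (p ^ 0)) : (χ ((k : ℕ) : ℤ_[p]) : R) = 1 := by
      rw [Nat.lt_one_iff.mp (k.isLt.trans_eq (pow_zero p)), Nat.cast_zero, hχ_zero]
    rw [funext coeff_eq]
    exact HasUniqueExpansion.one_id
  | succ c ih =>
    let e := finProdFinEquiv.trans (finCongr (pow_succ p c).symm)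
    have coeff_eq : ∀ k : Fin (p ^ (c + 1)), (χ ((k : ℕ) : ℤ_[p]) : R)
        = (χ (((e.symm k).2 : ℕ) : ℤ_[p]) : R) * φ (χ (((e.symm k).1 : ℕ) : ℤ_[p])) := by
      intro k
      rw [hcompat, ← Units.val_mul, ← hχ, ← natCast_finProdFinEquiv_pow_succ, e.apply_symm_apply]
    rw [iterate_succ', funext coeff_eq]
    exact (HasUniqueExpansion.subst hdirect ih).comp_equiv e.symm

/-- If `R` is a commutative ring with `χ : ℤ_p → Rˣ` and an injective ring endomorphism
`φ` with `φ (χ x) = χ (p x)` and `R = ⨁_{i=0}^{p-1} χ(i) φ(R)` (unique decomposition),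
then for every `c > 0` we have `R = ⨁_{i=0}^{p^c - 1} χ(i) φ^c(R)`. -/
theorem stmt0 (p : ℕ) [Fact p.Prime] (R : Type*) [CommRing R]
    (χ : ℤ_[p] → Rˣ) (hχ : ∀ x y : ℤ_[p], χ (x + y) = χ x * χ y)
    (φ : R →+* R) (hφ : Function.Injective φ)
    (hcompat : ∀ x : ℤ_[p], φ ((χ x : R)) = ((χ ((p : ℤ_[p]) * x) : R)))
    (hdirect : ∀ r : R, ∃! f : Fin p → R,
      r = ∑ i : Fin p, ((χ (((i : ℕ) : ℤ_[p])) : R)) * φ (f i))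
    (c : ℕ) (hc : 0 < c) :
    ∀ r : R, ∃! f : Fin (p ^ c) → R,
      r = ∑ i : Fin (p ^ c), ((χ (((i : ℕ) : ℤ_[p])) : R)) * (⇑φ)^[c] (f i) :=
  stmt0_general p R χ hχ φ hcompat hdirect c
end

section
/- Let R be a commutative ring with a group homomorphism χ : ℤ_p → Rˣ and an injective ring endomorphism φ : R → R with φ(χ(x)) = χ(p·x) and R = ⨁_{i=0}^{p-1} χ(i)·φ(R). Then for every positive integer c, the map X ↦ χ(1) induces a ring isomorphism φ^c(R)[X]/(X^{p^c} − χ(p^c)) ≅ R. -/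
/-!
Put `u = χ(1)`, so that `χ(n) = uⁿ` and `φ(u) = uᵖ`. The hypothesis says that every `r : R` has
a unique expansion `r = ∑_{i<p} φ(fᵢ) uⁱ`. Expanding each `fᵢ` again and using `φ(u)ʲ = u^{pj}`,
induction on `c` gives a unique expansion `r = ∑_{j<p^c} φ^c(gⱼ) uʲ` (the base-`p` digits of `j`
record the successive expansions), i.e. `1, u, …, u^{p^c-1}` is a basis of `R` over `φ^c(R)`.
As `u^{p^c} = χ(p^c)`, evaluation at `u` sends the power basis of
`φ^c(R)[X]/(X^{p^c} − χ(p^c))` to this basis, so it is a ring isomorphism.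
-/

open Polynomial Function

theorem map_natCast_of_map_add {A G : Type*} [AddMonoidWithOne A] [Group G] (χ : A → G)
    (hχ : ∀ x y, χ (x + y) = χ x * χ y) (n : ℕ) : χ n = χ 1 ^ n := by
  induction n with
  | zero => simpa using hχ 0 0
  | succ n ih => rw [Nat.cast_succ, hχ, ih, pow_succ]

section powExpansion

variable {R : Type*} [CommSemiring R]

def powExpansion (φ : R →+* R) (u : R) (n : ℕ) (f : Fin n → R) : R :=
  ∑ i : Fin n, φ (f i) * u ^ (i : ℕ)

theorem powExpansion_comp {φ ψ : R →+* R} {u : R} {m n : ℕ} (hu : φ u = u ^ n)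
    (g : Fin (m * n) → R) :
    powExpansion (φ.comp ψ) u (m * n) g =
      powExpansion φ u n fun i => powExpansion ψ u m fun j => g (finProdFinEquiv (j, i)) := by
  simp only [powExpansion, map_sum, map_mul, map_pow, hu, Finset.sum_mul]
  rw [← finProdFinEquiv.sum_comp, Fintype.sum_prod_type_right]
  refine Finset.sum_congr rfl fun i _ => Finset.sum_congr rfl fun j _ => ?_
  rw [finProdFinEquiv_apply_val, RingHom.comp_apply, pow_add, pow_mul]
  ring

theorem bijective_powExpansion_comp {φ ψ : R →+* R} {u : R} {m n : ℕ} (hu : φ u = u ^ n)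
    (hφ : Bijective (powExpansion φ u n)) (hψ : Bijective (powExpansion ψ u m)) :
    Bijective (powExpansion (φ.comp ψ) u (m * n)) := by
  have hdigits : Bijective fun (g : Fin (m * n) → R) i j => g (finProdFinEquiv (j, i)) :=
    (Equiv.piComm _).bijective.comp ((Equiv.curry _ _ _).bijective.comp
      (finProdFinEquiv.arrowCongr (Equiv.refl R)).symm.bijective)
  rw [funext (powExpansion_comp hu)]
  exact hφ.comp ((Bijective.piMap fun _ => hψ).comp hdigits)

theorem bijective_powExpansion_pow {φ : R →+* R} {u : R} {n : ℕ} (hu : φ u = u ^ n)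
    (hφ : Bijective (powExpansion φ u n)) (c : ℕ) :
    Bijective (powExpansion (φ ^ c) u (n ^ c)) := by
  induction c with
  | zero =>
    rw [pow_zero, pow_zero]
    have : powExpansion (1 : R →+* R) u 1 = fun f => f 0 := by
      funext f
      simp [powExpansion]
    rw [this]
    exact (Equiv.funUnique (Fin 1) R).bijective
  | succ c ih =>
    rw [pow_succ' φ, pow_succ n]
    exact bijective_powExpansion_comp hu hφ ih

end powExpansion

namespace AdjoinRoot

variable {S R : Type*} [CommRing S] [CommRing R]

theorem bijective_lift_of_bijective_sum {g : S[X]} (hg : g.Monic) {n : ℕ} (hdeg : g.natDegree = n)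
    {i : S →+* R} {u : R} (hu : g.eval₂ i u = 0)
    (hb : Bijective fun s : Fin n → S => ∑ j, i (s j) * u ^ (j : ℕ)) :
    Bijective (lift i u hu) := by
  subst hdeg
  have hcoords : lift i u hu ∘ (powerBasis' hg).basis.equivFun.symm =
      fun s : Fin g.natDegree → S => ∑ j, i (s j) * u ^ (j : ℕ) := by
    funext s
    simp only [comp_apply, Module.Basis.equivFun_symm_apply, PowerBasis.coe_basis,
      powerBasis'_gen, Algebra.smul_def, algebraMap_eq, map_sum, map_mul, lift_of, map_pow,
      lift_root]
    rfl
  rw [← hcoords] at hb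
  exact (Bijective.of_comp_iff _ (LinearEquiv.bijective _)).mp hb

theorem exists_ringEquiv_X_pow_sub_C {n : ℕ} (hn : n ≠ 0) (i : S →+* R) {u : R} {a : S}
    (hu : u ^ n = i a) (hb : Bijective fun s : Fin n → S => ∑ j, i (s j) * u ^ (j : ℕ)) :
    ∃ e : AdjoinRoot (X ^ n - C a) ≃+* R, e (root _) = u := by
  have hroot : (X ^ n - C a).eval₂ i u = 0 := by simp [hu]
  refine ⟨RingEquiv.ofBijective (lift i u hroot) ?_, lift_root hroot⟩
  rcases subsingleton_or_nontrivial S with _ | _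
  · have : Subsingleton R := subsingleton_of_zero_eq_one (by
      rw [← map_zero i, ← map_one i, Subsingleton.elim (0 : S) 1])
    have : Subsingleton (AdjoinRoot (X ^ n - C a)) :=
      (mk_surjective : Surjective (mk (X ^ n - C a))).subsingleton
    exact ⟨injective_of_subsingleton _, fun r => ⟨0, Subsingleton.elim _ _⟩⟩
  · exact bijective_lift_of_bijective_sum (monic_X_pow_sub_C a hn) natDegree_X_pow_sub_C hroot hb

end AdjoinRoot

theorem stmt1_general (p : ℕ) [Fact p.Prime] (R : Type*) [CommRing R]
    (χ : ℤ_[p] → Rˣ) (hχ : ∀ x y : ℤ_[p], χ (x + y) = χ x * χ y)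
    (φ : R →+* R)
    (hcompat : ∀ x : ℤ_[p], φ ((χ x : R)) = ((χ ((p : ℤ_[p]) * x) : R)))
    (hdirect : ∀ r : R, ∃! f : Fin p → R,
      r = ∑ i : Fin p, ((χ (((i : ℕ) : ℤ_[p])) : R)) * φ (f i))
    (c : ℕ)
    (hmem : ((χ ((p : ℤ_[p]) ^ c) : R)) ∈ (φ ^ c : R →+* R).range) :
    ∃ e : (Polynomial ((φ ^ c : R →+* R).range) ⧸
        Ideal.span {(Polynomial.X : Polynomial ((φ ^ c : R →+* R).range)) ^ (p ^ c)
          - Polynomial.C (⟨_, hmem⟩ : (φ ^ c : R →+* R).range)}) ≃+* R,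
      e ((Ideal.Quotient.mk _) Polynomial.X) = ((χ 1 : R)) := by
  have hχ_pow (n : ℕ) : (χ n : R) = (χ 1 : R) ^ n := by
    rw [map_natCast_of_map_add χ hχ, Units.val_pow_eq_pow_val]
  have hu : φ (χ 1) = (χ 1 : R) ^ p := by rw [hcompat, mul_one, hχ_pow]
  have hφ : Bijective (powExpansion φ (χ 1) p) := by
    refine (bijective_iff_existsUnique _).mpr fun r => ?_
    simpa only [powExpansion, hχ_pow, mul_comm, eq_comm] using hdirect r
  -- `powExpansion (φ ^ c)` factors through the surjection `(φ ^ c).rangeRestrict`.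
  have hφc : Bijective ((fun s : Fin (p ^ c) → (φ ^ c).range =>
      ∑ j, (s j : R) * (χ 1 : R) ^ (j : ℕ)) ∘ Pi.map fun _ => (φ ^ c).rangeRestrict) :=
    bijective_powExpansion_pow hu hφ c
  have hrestrict := Surjective.piMap fun (_ : Fin (p ^ c)) => (φ ^ c).rangeRestrict_surjective
  refine AdjoinRoot.exists_ringEquiv_X_pow_sub_C (pow_ne_zero c (NeZero.ne p))
    (φ ^ c).range.subtype ?_ ⟨hφc.1.of_comp_right hrestrict, hφc.2.of_comp⟩
  rw [← hχ_pow, Nat.cast_pow]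
  rfl

/-- For a `φ`-ring `R` over `ℤ_p`, the map `X ↦ χ(1)` induces a ring isomorphism
`φ^c(R)[X]/(X^{p^c} − χ(p^c)) ≅ R`. -/
theorem stmt1 (p : ℕ) [Fact p.Prime] (R : Type*) [CommRing R]
    (χ : ℤ_[p] → Rˣ) (hχ : ∀ x y : ℤ_[p], χ (x + y) = χ x * χ y)
    (φ : R →+* R) (hφ : Function.Injective φ)
    (hcompat : ∀ x : ℤ_[p], φ ((χ x : R)) = ((χ ((p : ℤ_[p]) * x) : R)))
    (hdirect : ∀ r : R, ∃! f : Fin p → R,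
      r = ∑ i : Fin p, ((χ (((i : ℕ) : ℤ_[p])) : R)) * φ (f i))
    (c : ℕ) (hc : 0 < c)
    (hmem : ((χ ((p : ℤ_[p]) ^ c) : R)) ∈ (φ ^ c : R →+* R).range) :
    ∃ e : (Polynomial ((φ ^ c : R →+* R).range) ⧸
        Ideal.span {(Polynomial.X : Polynomial ((φ ^ c : R →+* R).range)) ^ (p ^ c)
          - Polynomial.C (⟨_, hmem⟩ : (φ ^ c : R →+* R).range)}) ≃+* R,
      e ((Ideal.Quotient.mk _) Polynomial.X) = ((χ 1 : R)) :=
  stmt1_general p R χ hχ φ hcompat hdirect c hmem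
end

section
/- Let S be a ring with an injective ring endomorphism φ and a complete descending filtration by two-sided ideals I_1 ⊇ I_2 ⊇ ⋯ with ∩_k I_k = 0, S ≅ lim S/I_k, and φ(I_k) ⊆ I_{k+1} for all k. Let A be an invertible d×d matrix over S and B a d×d matrix with entries in I_1 such that A+B is invertible. Then there is a unique d×d matrix X with entries in I_1 satisfying φ(id + X)(A + B) = A(id + X), given by the convergent series X = Σ_{k≥0} A^{-1}φ(A^{-1})⋯φ^{k-1}(A^{-1})·φ^k(A^{-1}B)·φ^{k-1}(A+B)⋯φ(A+B)(A+B). -/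
/-!
Multiplying by `A⁻¹`, the equation for `X` says that `X` is a fixed point of the affine map
`X ↦ A⁻¹B + A⁻¹ φ(X) (A + B)`. Since `φ` raises the filtration degree by one, this map is a
contraction for the filtration: if `X - Y` has entries in `I_k`, their images differ by entries
in `I_{k+1}`. A contraction of a complete separated filtered group has a unique fixed point, the
limit of its iterates, and the `n`-th iterate of our map at `0` is the `n`-th partial sum of the
series.
-/

open Function

section FilteredFixedPoint

variable {G σ : Type*} [AddCommGroup G] [SetLike σ G] {J : ℕ → σ} {F : G → G}

theorem iterate_sub_iterate_mem (hF : ∀ k x y, x - y ∈ J k → F x - F y ∈ J (k + 1))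
    {k : ℕ} {x y : G} (h : x - y ∈ J k) (n : ℕ) : F^[n] x - F^[n] y ∈ J (k + n) := by
  induction n with
  | zero => simpa using h
  | succ n ih => simpa only [iterate_succ_apply', ← add_assoc] using hF _ _ _ ih

variable [Preorder σ] [IsConcreteLE σ G]

theorem Function.IsFixedPt.eq_of_sub_mem (hJ : Antitone J) (hsep : ∀ x, (∀ k, x ∈ J k) → x = 0)
    (hF : ∀ k x y, x - y ∈ J k → F x - F y ∈ J (k + 1)) {x y : G} {k : ℕ}
    (hx : IsFixedPt F x) (hy : IsFixedPt F y) (h : x - y ∈ J k) : x = y :=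
  sub_eq_zero.mp <| hsep _ fun n => SetLike.le_def.mp (hJ (n.le_add_left k)) <| by
    simpa only [(hx.iterate n).eq, (hy.iterate n).eq] using iterate_sub_iterate_mem hF h n

variable [AddSubgroupClass σ G]

theorem iterate_sub_self_mem (hJ : Antitone J)
    (hF : ∀ k x y, x - y ∈ J k → F x - F y ∈ J (k + 1))
    {m : ℕ} {x : G} (h : F x - x ∈ J m) (n : ℕ) : F^[n] x - x ∈ J m := by
  induction n with
  | zero => simp [zero_mem]
  | succ n ih =>
    rw [iterate_succ_apply', ← sub_add_sub_cancel _ (F x)]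
    exact add_mem (SetLike.le_def.mp (hJ m.le_succ) (hF _ _ _ ih)) h

theorem iterate_sub_iterate_mem_of_le (hJ : Antitone J)
    (hF : ∀ k x y, x - y ∈ J k → F x - F y ∈ J (k + 1))
    {m : ℕ} {x : G} (h : F x - x ∈ J m) {n l : ℕ} (hnl : n ≤ l) :
    F^[l] x - F^[n] x ∈ J (m + n) := by
  obtain ⟨j, rfl⟩ := Nat.exists_eq_add_of_le hnl
  rw [iterate_add_apply]
  exact iterate_sub_iterate_mem hF (iterate_sub_self_mem hJ hF h j) n

theorem exists_isFixedPt_sub_iterate_mem (hJ : Antitone J)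
    (hsep : ∀ x, (∀ k, x ∈ J k) → x = 0)
    (hcomplete : ∀ x : ℕ → G, (∀ k l, k ≤ l → x l - x k ∈ J k) → ∃ y, ∀ k, y - x k ∈ J k)
    (hF : ∀ k x y, x - y ∈ J k → F x - F y ∈ J (k + 1))
    {m : ℕ} {x : G} (h : F x - x ∈ J m) :
    ∃ y, IsFixedPt F y ∧ ∀ n, y - F^[n] x ∈ J (n + m) := by
  obtain ⟨y, hy⟩ := hcomplete (F^[·] x) fun k l hkl =>
    SetLike.le_def.mp (hJ (k.le_add_left m)) (iterate_sub_iterate_mem_of_le hJ hF h hkl)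
  have hlim : ∀ n, y - F^[n] x ∈ J (n + m) := fun n => by
    rw [← sub_add_sub_cancel y (F^[n + m] x), add_comm n m]
    exact add_mem (hy _) (iterate_sub_iterate_mem_of_le hJ hF h (n.le_add_left m))
  refine ⟨y, sub_eq_zero.mp (hsep _ fun k => ?_), hlim⟩
  have hstep : F y - F^[k + 1] x ∈ J (k + m + 1) := by
    simpa only [iterate_succ_apply'] using hF _ _ _ (hlim k)
  have hnext : y - F^[k + 1] x ∈ J (k + m + 1) := by simpa only [add_right_comm] using hlim (k + 1)
  rw [← sub_sub_sub_cancel_right (F y) y (F^[k + 1] x)]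
  exact SetLike.le_def.mp (hJ (by omega)) (sub_mem hstep hnext)

end FilteredFixedPoint

section TwistedStep

variable {M F : Type*} [Monoid M] [FunLike F M M] [MonoidHomClass F M M]

theorem List.prod_map_iterate_range_succ (f : F) (a : M) (k : ℕ) :
    ((List.range (k + 1)).map fun j => f^[j] a).prod =
      a * f ((List.range k).map fun j => f^[j] a).prod := by
  rw [List.range_succ_eq_map, List.map_cons, List.prod_cons, map_list_prod, List.map_map,
    List.map_map]
  congr 3
  funext j
  exact iterate_succ_apply' f j a

theorem List.prod_map_iterate_reverse_range_succ (f : F) (a : M) (k : ℕ) :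
    ((List.range (k + 1)).reverse.map fun j => f^[j] a).prod =
      f ((List.range k).reverse.map fun j => f^[j] a).prod * a := by
  rw [List.range_succ_eq_map, List.reverse_cons, List.map_append, List.prod_append,
    map_list_prod]
  simp only [List.map_reverse, List.map_map, List.map_singleton, List.prod_singleton,
    iterate_zero_apply]
  congr 4
  funext j
  exact iterate_succ_apply' f j a

variable {R : Type*} [Ring R] (Φ : R →+* R)

def twistedStep (b c e x : R) : R := b + c * Φ x * e

def twistedSeriesTerm (b c e : R) (k : ℕ) : R :=
  ((List.range k).map fun j => Φ^[j] c).prod * Φ^[k] b *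
    ((List.range k).reverse.map fun j => Φ^[j] e).prod

theorem twistedSeriesTerm_succ (b c e : R) (k : ℕ) :
    twistedSeriesTerm Φ b c e (k + 1) = c * Φ (twistedSeriesTerm Φ b c e k) * e := by
  simp only [twistedSeriesTerm, List.prod_map_iterate_range_succ,
    List.prod_map_iterate_reverse_range_succ, iterate_succ_apply', map_mul, mul_assoc]

theorem twistedSeriesTerm_zero (b c e : R) : twistedSeriesTerm Φ b c e 0 = b := by
  simp [twistedSeriesTerm]

theorem iterate_twistedStep_zero (b c e : R) (n : ℕ) :
    (twistedStep Φ b c e)^[n] 0 = ∑ k ∈ Finset.range n, twistedSeriesTerm Φ b c e k := by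
  induction n with
  | zero => rfl
  | succ n ih =>
    rw [iterate_succ_apply', ih, Finset.sum_range_succ', twistedSeriesTerm_zero, add_comm,
      twistedStep, map_sum, Finset.mul_sum, Finset.sum_mul]
    simp only [twistedSeriesTerm_succ]

theorem twistedStep_sub_mem {J : ℕ → TwoSidedIdeal R} (hΦ : ∀ k, ∀ x ∈ J k, Φ x ∈ J (k + 1))
    (b c e : R) (k : ℕ) (x y : R) (h : x - y ∈ J k) :
    twistedStep Φ b c e x - twistedStep Φ b c e y ∈ J (k + 1) := by
  have : twistedStep Φ b c e x - twistedStep Φ b c e y = c * Φ (x - y) * e := by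
    simp only [twistedStep, map_sub]; noncomm_ring
  rw [this]
  exact (J _).mul_mem_right _ _ ((J _).mul_mem_left _ _ (hΦ k _ h))

theorem isFixedPt_twistedStep_iff {A : R} (hA : IsUnit A) (B X : R) :
    IsFixedPt (twistedStep Φ (Ring.inverse A * B) (Ring.inverse A) (A + B)) X ↔
      Φ (1 + X) * (A + B) = A * (1 + X) := by
  obtain ⟨u, rfl⟩ := hA
  rw [IsFixedPt, twistedStep, Ring.inverse_unit, mul_assoc, ← mul_add, eq_comm,
    Units.eq_inv_mul_iff_mul_eq, map_add, map_one, one_add_mul, mul_one_add, add_assoc,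
    add_right_inj]
  exact eq_comm

end TwistedStep

theorem RingHom.iterate_mapMatrix_apply {n S : Type*} [Fintype n] [DecidableEq n]
    [NonAssocSemiring S] (φ : S →+* S) (M : Matrix n n S) (j : ℕ) :
    (⇑φ.mapMatrix)^[j] M = M.map (⇑φ)^[j] := by
  induction j with
  | zero => rfl
  | succ j ih => rw [iterate_succ_apply', ih, RingHom.mapMatrix_apply, Matrix.map_map,
      ← iterate_succ']

namespace TwoSidedIdeal

variable {S n : Type*} [NonUnitalNonAssocRing S] [Fintype n] {I : ℕ → TwoSidedIdeal S}

theorem eq_zero_of_forall_mem_matrix (hsep : ∀ s, (∀ k, s ∈ I k) → s = 0) (M : Matrix n n S)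
    (hM : ∀ k, M ∈ (I k).matrix n) : M = 0 :=
  Matrix.ext fun i j => hsep _ fun k => hM k i j

theorem exists_sub_mem_matrix_of_cauchy
    (hcomplete : ∀ x : ℕ → S, (∀ k l, k ≤ l → x l - x k ∈ I k) → ∃ y, ∀ k, y - x k ∈ I k)
    (M : ℕ → Matrix n n S) (hM : ∀ k l, k ≤ l → M l - M k ∈ (I k).matrix n) :
    ∃ Y, ∀ k, Y - M k ∈ (I k).matrix n := by
  choose Y hY using fun i j => hcomplete (M · i j) fun k l hkl => hM k l hkl i j
  exact ⟨Matrix.of Y, fun k i j => hY i j k⟩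

end TwoSidedIdeal

theorem stmt8_general (S : Type*) [Ring S] (φ : S →+* S)
    (I : ℕ → TwoSidedIdeal S)
    (hdesc : ∀ k, I (k + 1) ≤ I k)
    (hsep : ∀ s : S, (∀ k, s ∈ I k) → s = 0)
    (hcomplete : ∀ x : ℕ → S, (∀ k l, k ≤ l → x l - x k ∈ I k) →
      ∃ y : S, ∀ k, y - x k ∈ I k)
    (hφI : ∀ k, ∀ s ∈ I k, φ s ∈ I (k + 1))
    (d : ℕ) (A B : Matrix (Fin d) (Fin d) S)
    (hA : IsUnit A) (hB : ∀ i j, B i j ∈ I 1) :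
    ∃ X : Matrix (Fin d) (Fin d) S,
      ((∀ i j, X i j ∈ I 1) ∧
        (1 + X).map (⇑φ) * (A + B) = A * (1 + X) ∧
        ∀ n : ℕ, ∀ i j,
          (X - ∑ k ∈ Finset.range (n + 1),
            ((List.range k).map (fun j' => (Ring.inverse A).map ((⇑φ)^[j']))).prod *
              ((Ring.inverse A * B).map ((⇑φ)^[k])) *
              ((List.range k).reverse.map (fun j' => (A + B).map ((⇑φ)^[j']))).prod) i j
            ∈ I (n + 2)) ∧
      ∀ Y : Matrix (Fin d) (Fin d) S,
        (∀ i j, Y i j ∈ I 1) → (1 + Y).map (⇑φ) * (A + B) = A * (1 + Y) → Y = X := by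
  set J := fun k => (I k).matrix (Fin d)
  have hJ : Antitone J :=
    (TwoSidedIdeal.matrix_monotone _).comp_antitone (antitone_nat_of_succ_le hdesc)
  have hsepJ := TwoSidedIdeal.eq_zero_of_forall_mem_matrix (n := Fin d) hsep
  have hF := twistedStep_sub_mem φ.mapMatrix (J := J) (fun k M hM i j => hφI k _ (hM i j))
    (Ring.inverse A * B) (Ring.inverse A) (A + B)
  have hF₀ : twistedStep φ.mapMatrix (Ring.inverse A * B) (Ring.inverse A) (A + B) 0 - 0 ∈ J 1 := by
    simpa [twistedStep] using (J 1).mul_mem_left _ _ (show B ∈ J 1 from hB)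
  obtain ⟨X, hXfix, hX⟩ := exists_isFixedPt_sub_iterate_mem hJ hsepJ
    (TwoSidedIdeal.exists_sub_mem_matrix_of_cauchy hcomplete) hF hF₀
  have hX₁ : X ∈ J 1 := by simpa using hX 0
  refine ⟨X, ⟨hX₁, (isFixedPt_twistedStep_iff _ hA B X).mp hXfix, fun n => ?_⟩,
    fun Y hY hYeq => ((isFixedPt_twistedStep_iff _ hA B Y).mpr hYeq).eq_of_sub_mem hJ hsepJ hF
      hXfix (sub_mem (show Y ∈ J 1 from hY) hX₁)⟩
  have hpartial := hX (n + 1)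
  rw [iterate_twistedStep_zero] at hpartial
  simp only [← RingHom.iterate_mapMatrix_apply]
  exact hpartial

/-- Over a ring `S` with injective endomorphism `φ`, a complete separated descending filtration
by two-sided ideals `I_k` with `φ(I_k) ⊆ I_{k+1}`, and invertible matrices `A`, `A+B` with the
entries of `B` in `I_1`, there is a unique matrix `X` with entries in `I_1` satisfying
`φ(1+X)(A+B) = A(1+X)`, and it is the sum of the convergent series
`Σ_k A⁻¹φ(A⁻¹)⋯φ^{k-1}(A⁻¹)·φ^k(A⁻¹B)·φ^{k-1}(A+B)⋯φ(A+B)(A+B)`. -/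
theorem stmt8 (S : Type*) [Ring S] (φ : S →+* S) (hφ : Function.Injective φ)
    (I : ℕ → TwoSidedIdeal S)
    (hdesc : ∀ k, I (k + 1) ≤ I k)
    (hsep : ∀ s : S, (∀ k, s ∈ I k) → s = 0)
    (hcomplete : ∀ x : ℕ → S, (∀ k l, k ≤ l → x l - x k ∈ I k) →
      ∃ y : S, ∀ k, y - x k ∈ I k)
    (hφI : ∀ k, ∀ s ∈ I k, φ s ∈ I (k + 1))
    (d : ℕ) (A B : Matrix (Fin d) (Fin d) S)
    (hA : IsUnit A) (hB : ∀ i j, B i j ∈ I 1) (hAB : IsUnit (A + B)) :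
    ∃ X : Matrix (Fin d) (Fin d) S,
      ((∀ i j, X i j ∈ I 1) ∧
        (1 + X).map (⇑φ) * (A + B) = A * (1 + X) ∧
        ∀ n : ℕ, ∀ i j,
          (X - ∑ k ∈ Finset.range (n + 1),
            ((List.range k).map (fun j' => (Ring.inverse A).map ((⇑φ)^[j']))).prod *
              ((Ring.inverse A * B).map ((⇑φ)^[k])) *
              ((List.range k).reverse.map (fun j' => (A + B).map ((⇑φ)^[j']))).prod) i j
            ∈ I (n + 2)) ∧
      ∀ Y : Matrix (Fin d) (Fin d) S,
        (∀ i j, Y i j ∈ I 1) → (1 + Y).map (⇑φ) * (A + B) = A * (1 + Y) → Y = X :=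
  stmt8_general S φ I hdesc hsep hcomplete hφI d A B hA hB
end

section
/- For β(t) ∈ ℤ_p with p-adic valuation m = val_p(β(t)) ≥ 0, and for any real ρ with p^{-1} < ρ < 1, the multiplicative ρ-Gauss norm of (1+b)^{β(t)} − 1 = Σ_{i≥1} C(β(t), i) b^i in the ring of power series over ℚ_p satisfies ‖(1+b)^{β(t)} − 1‖_ρ = max_{0 ≤ j ≤ m} ρ^{p^j} p^{j−m}. -/
/-!
Write `C(x, k)` for `Ring.choose x k`; as `ℤ_[p]` is a binomial ring, `|C(n, k)| ≤ 1`.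
The identity `k C(n, k) = n C(n - 1, k - 1)` also gives `|C(n, k)| ≤ |n| / |k|`, hence
`|C(n, k)| ρ^k ≤ ρ^{p^j} p^{j - m}` for `j = min (v_p k) m`, because `p^j ≤ k` and `ρ ≤ 1`.
For `k = p^j` with `j ≤ m` the bound is attained: `|n| < |t|` for `0 < t < p^j`, so each factor
`(n - t) / t` of `C(n - 1, p^j - 1)` is a unit.
-/

open Finset
open scoped Nat

namespace Ring

variable {R : Type*} [CommRing R] [BinomialRing R]

open Polynomial in
theorem factorial_mul_choose_eq_prod (r : R) (k : ℕ) :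
    (k ! : R) * choose r k = ∏ t ∈ range k, (r - t) := by
  rw [← nsmul_eq_mul, ← descPochhammer_eq_factorial_smul_choose, ← aeval_eq_smeval, aeval_def,
    ← eval_map, descPochhammer_map, descPochhammer_eval_eq_prod_range]

theorem succ_mul_choose_succ (r : R) (k : ℕ) :
    ((k + 1 : ℕ) : R) * choose r (k + 1) = r * choose (r - 1) k := by
  simpa [nsmul_eq_mul, choose_one_right] using
    choose_smul_choose r (n := k + 1) (k := 1) (by omega)

end Ring

namespace PadicInt

variable {p : ℕ} [hp : Fact p.Prime]

theorem coe_choose (x : ℤ_[p]) (k : ℕ) :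
    ((Ring.choose x k : ℤ_[p]) : ℚ_[p]) =
      (∏ t ∈ range k, ((x : ℚ_[p]) - (t : ℚ_[p]))) / (k ! : ℚ_[p]) := by
  rw [eq_div_iff (by exact_mod_cast k.factorial_ne_zero), mul_comm]
  have h := congrArg Coe.ringHom (Ring.factorial_mul_choose_eq_prod x k)
  simp only [map_mul, map_prod, map_sub, map_natCast] at h
  exact h

theorem norm_natCast_eq_zpow_neg_padicValNat {k : ℕ} (hk : k ≠ 0) :
    ‖(k : ℤ_[p])‖ = (p : ℝ) ^ (-(padicValNat p k : ℤ)) := by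
  rw [← padic_norm_e_of_padicInt, coe_natCast,
    Padic.norm_eq_zpow_neg_valuation (by exact_mod_cast hk), Padic.valuation_natCast]

theorem norm_choose_le_norm_div {x : ℤ_[p]} {k : ℕ} (hk : k ≠ 0) :
    ‖Ring.choose x k‖ ≤ ‖x‖ / ‖(k : ℤ_[p])‖ := by
  obtain ⟨k, rfl⟩ := Nat.exists_eq_add_one.mpr (Nat.pos_of_ne_zero hk)
  rw [le_div_iff₀' (norm_pos_iff.mpr (by exact_mod_cast hk)), ← norm_mul,
    Ring.succ_mul_choose_succ, norm_mul]
  exact mul_le_of_le_one_right (norm_nonneg _) (norm_le_one _)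

theorem norm_choose_le_zpow {x : ℤ_[p]} (hx : x ≠ 0) {k : ℕ} (hk : k ≠ 0) :
    ‖Ring.choose x k‖ ≤
      (p : ℝ) ^ ((min (padicValNat p k) x.valuation : ℕ) - (x.valuation : ℤ)) := by
  rcases le_total x.valuation (padicValNat p k) with h | h
  · rw [min_eq_right h, sub_self, zpow_zero]
    exact norm_le_one _
  · calc ‖Ring.choose x k‖ ≤ ‖x‖ / ‖(k : ℤ_[p])‖ := norm_choose_le_norm_div hk
      _ = _ := by
        rw [min_eq_left h, norm_eq_zpow_neg_valuation hx, norm_natCast_eq_zpow_neg_padicValNat hk,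
          ← zpow_sub₀ (by simp [hp.out.ne_zero])]
        ring_nf

theorem norm_choose_mul_pow_le {x : ℤ_[p]} (hx : x ≠ 0) {k : ℕ} (hk : k ≠ 0) {ρ : ℝ}
    (hρ₀ : 0 ≤ ρ) (hρ₁ : ρ ≤ 1) :
    ‖Ring.choose x k‖ * ρ ^ k ≤ ρ ^ p ^ min (padicValNat p k) x.valuation *
      (p : ℝ) ^ ((min (padicValNat p k) x.valuation : ℕ) - (x.valuation : ℤ)) := by
  have hpow : p ^ min (padicValNat p k) x.valuation ≤ k :=
    (Nat.pow_le_pow_right hp.out.pos (min_le_left _ _)).trans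
      (Nat.le_of_dvd (Nat.pos_of_ne_zero hk) pow_padicValNat_dvd)
  rw [mul_comm]
  exact mul_le_mul (pow_le_pow_of_le_one hρ₀ hρ₁ hpow) (norm_choose_le_zpow hx hk)
    (norm_nonneg _) (by positivity)

theorem norm_lt_norm_natCast {x : ℤ_[p]} {j t : ℕ} (hx : ‖x‖ ≤ (p : ℝ) ^ (-j : ℤ))
    (ht₀ : t ≠ 0) (ht : t < p ^ j) : ‖x‖ < ‖(t : ℤ_[p])‖ := by
  by_contra! h
  have hdvd : (p : ℤ) ^ j ∣ (t : ℤ) :=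
    norm_int_le_pow_iff_dvd.mp (by rw [Int.cast_natCast]; exact h.trans hx)
  exact absurd (Nat.le_of_dvd (Nat.pos_of_ne_zero ht₀) (by exact_mod_cast hdvd)) (by omega)

theorem norm_sub_natCast_eq {x : ℤ_[p]} {j t : ℕ} (hx : ‖x‖ ≤ (p : ℝ) ^ (-j : ℤ))
    (ht₀ : t ≠ 0) (ht : t < p ^ j) : ‖x - t‖ = ‖(t : ℤ_[p])‖ := by
  have h := norm_lt_norm_natCast hx ht₀ ht
  rw [sub_eq_add_neg,
    IsUltrametricDist.norm_add_eq_max_of_norm_ne_norm (by rw [norm_neg]; exact h.ne),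
    norm_neg, max_eq_right h.le]

theorem norm_choose_sub_one_eq_one {x : ℤ_[p]} {j k : ℕ}
    (hx : ‖x‖ ≤ (p : ℝ) ^ (-j : ℤ)) (hk : k < p ^ j) :
    ‖Ring.choose (x - 1) k‖ = 1 := by
  have hprod : ‖∏ t ∈ range k, (x - 1 - t)‖ = ‖(k ! : ℤ_[p])‖ := by
    rw [← prod_range_add_one_eq_factorial, Nat.cast_prod, norm_prod, norm_prod]
    refine prod_congr rfl fun t ht => ?_
    rw [sub_sub, add_comm, ← Nat.cast_add_one]
    exact norm_sub_natCast_eq hx t.succ_ne_zero (by linarith [mem_range.mp ht])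
  rw [← Ring.factorial_mul_choose_eq_prod, norm_mul] at hprod
  exact (mul_eq_left₀ (norm_ne_zero_iff.mpr (by exact_mod_cast k.factorial_ne_zero))).mp hprod

theorem norm_choose_prime_pow {x : ℤ_[p]} {j : ℕ} (hx : ‖x‖ ≤ (p : ℝ) ^ (-j : ℤ)) :
    ‖Ring.choose x (p ^ j)‖ = ‖x‖ * p ^ j := by
  obtain ⟨k, hk⟩ : ∃ k, p ^ j = k + 1 := Nat.exists_eq_add_one.mpr (Nat.pos_of_neZero _)
  have h := congrArg norm (Ring.succ_mul_choose_succ x k)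
  rw [← hk, norm_mul, norm_mul, norm_choose_sub_one_eq_one hx (by omega), mul_one, Nat.cast_pow,
    norm_p_pow, zpow_neg, zpow_natCast, inv_mul_eq_iff_eq_mul₀ (by simp [hp.out.ne_zero])] at h
  rw [h, mul_comm]

theorem norm_choose_prime_pow_eq_zpow {x : ℤ_[p]} (hx : x ≠ 0) {j : ℕ}
    (hj : j ≤ x.valuation) :
    ‖Ring.choose x (p ^ j)‖ = (p : ℝ) ^ ((j : ℤ) - x.valuation) := by
  rw [norm_choose_prime_pow ((norm_le_pow_iff_le_valuation x hx j).mpr hj),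
    norm_eq_zpow_neg_valuation hx, ← zpow_natCast,
    ← zpow_add₀ (by simp [hp.out.ne_zero])]
  ring_nf

end PadicInt

/-- For `n ∈ ℤ_p` with valuation `m ≥ 0` and `p⁻¹ < ρ < 1`, the `ρ`-Gauss norm of
`(1+b)^n − 1 = Σ_{i≥1} C(n,i) bⁱ`, i.e. `sup_{i ≥ 1} |C(n,i)| ρⁱ`, equals
`max_{0 ≤ j ≤ m} ρ^{p^j} p^{j−m}`. -/
theorem stmt10 (p : ℕ) [Fact p.Prime] (n : ℤ_[p]) (hn : n ≠ 0)
    (m : ℕ) (hm : n.valuation = m)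
    (ρ : ℝ) (hρ1 : (p : ℝ)⁻¹ < ρ) (hρ2 : ρ < 1) :
    (⨆ i : ℕ, ‖(∏ j ∈ Finset.range (i + 1), ((n : ℚ_[p]) - (j : ℚ_[p]))) /
        ((i + 1).factorial : ℚ_[p])‖ * ρ ^ (i + 1)) =
      ⨆ j : Fin (m + 1), ρ ^ (p ^ (j : ℕ)) * (p : ℝ) ^ (((j : ℕ) : ℤ) - (m : ℤ)) := by
  have hρ₀ : 0 ≤ ρ := (lt_trans (by simp [(Fact.out : p.Prime).pos]) hρ1).le
  simp only [← PadicInt.coe_choose, PadicInt.padic_norm_e_of_padicInt]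
  subst hm
  apply le_antisymm
  · refine ciSup_mono_of_forall_exists (Set.finite_range _).bddAbove fun i =>
      ⟨⟨min (padicValNat p (i + 1)) n.valuation, by omega⟩, ?_⟩
    exact PadicInt.norm_choose_mul_pow_le hn i.succ_ne_zero hρ₀ hρ2.le
  · have hbdd : BddAbove (Set.range fun i : ℕ => ‖Ring.choose n (i + 1)‖ * ρ ^ (i + 1)) :=
      ⟨1, Set.forall_mem_range.mpr fun i =>
        mul_le_one₀ (PadicInt.norm_le_one _) (by positivity) (pow_le_one₀ hρ₀ hρ2.le)⟩
    refine ciSup_mono_of_forall_exists hbdd fun j => ⟨p ^ (j : ℕ) - 1, le_of_eq ?_⟩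
    rw [Nat.sub_add_cancel (Nat.one_le_pow _ _ (Fact.out : p.Prime).pos),
      PadicInt.norm_choose_prime_pow_eq_zpow hn (Nat.lt_succ_iff.mp j.isLt), mul_comm]
end

section
/- Let T_+ be a commutative monoid and Φ⁺ a finite set containing a distinguished element α, with a monoid homomorphism t ↦ (m(β,t))_{β∈Φ⁺} from T_+ to (ℕ^{Φ⁺}, +). Define t₁ ≤_α t₂ iff there exists u ∈ T_+ with t₂ = t₁u (in the quotient by units) and m(β,u) ≥ m(α,u) ≥ 0 for all β ∈ Φ⁺. Suppose there exists s̄ ∈ T_+ with m(α,s̄) = 0 and m(β,s̄) > 0 for all β ≠ α. Then ≤_α is a right-filtered partial preorder on T_+: any two elements have a common upper bound. -/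
/-! The cofactors `u` allowed by `≤_α` form a submonoid, so `≤_α` is a preorder. For a common
upper bound of `t₁, t₂` take `t₁ t₂ s̄ᵏ` with `k = m(α,t₁) + m(α,t₂)`: multiplying by `s̄ᵏ` leaves
`m(α,·)` unchanged and raises every other `m(β,·)` by at least `k`, which makes both cofactors
`t₂ s̄ᵏ` and `t₁ s̄ᵏ` dominant. -/

namespace RightFiltered

variable {T Φ : Type*} [CommMonoid T] (m : T → Φ → ℕ) (α : Φ)

def IsDominant (u : T) : Prop := ∀ β, m u α ≤ m u β

def DominantLE (t₁ t₂ : T) : Prop := ∃ u, t₂ = t₁ * u ∧ IsDominant m α u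

variable {m} (hmul : ∀ t u β, m (t * u) β = m t β + m u β)
include hmul

theorem map_one_eq_zero (β : Φ) : m 1 β = 0 := by
  have h := hmul 1 1 β
  rw [one_mul] at h
  omega

theorem map_pow (t : T) (k : ℕ) (β : Φ) : m (t ^ k) β = k * m t β := by
  induction k with
  | zero => simp [map_one_eq_zero hmul]
  | succ k ih => rw [pow_succ, hmul, ih, Nat.succ_mul]

theorem isDominant_one : IsDominant m α 1 := fun β => by
  rw [map_one_eq_zero hmul, map_one_eq_zero hmul]

theorem IsDominant.mul {u v : T} (hu : IsDominant m α u) (hv : IsDominant m α v) :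
    IsDominant m α (u * v) := fun β => by
  rw [hmul, hmul]
  exact Nat.add_le_add (hu β) (hv β)

theorem isDominant_mul_pow {s : T} (hsα : m s α = 0) (hsβ : ∀ β, β ≠ α → 0 < m s β)
    (t : T) {k : ℕ} (hk : m t α ≤ k) : IsDominant m α (t * s ^ k) := fun β => by
  rw [hmul, hmul, map_pow hmul, map_pow hmul, hsα, Nat.mul_zero, Nat.add_zero]
  rcases eq_or_ne β α with rfl | hβ
  · exact Nat.le_add_right _ _
  · calc m t α ≤ k * m s β := hk.trans (Nat.le_mul_of_pos_right k (hsβ β hβ))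
      _ ≤ m t β + k * m s β := Nat.le_add_left _ _

theorem dominantLE_refl (t : T) : DominantLE m α t t :=
  ⟨1, (mul_one t).symm, isDominant_one α hmul⟩

theorem DominantLE.trans {a b c : T} :
    DominantLE m α a b → DominantLE m α b c → DominantLE m α a c := by
  rintro ⟨u, rfl, hu⟩ ⟨v, rfl, hv⟩
  exact ⟨u * v, mul_assoc a u v, hu.mul α hmul hv⟩

theorem exists_dominantLE_and_dominantLE {s : T} (hsα : m s α = 0)
    (hsβ : ∀ β, β ≠ α → 0 < m s β) (t₁ t₂ : T) :
    ∃ t₃, DominantLE m α t₁ t₃ ∧ DominantLE m α t₂ t₃ := by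
  set k := m t₁ α + m t₂ α
  refine ⟨t₁ * t₂ * s ^ k, ⟨t₂ * s ^ k, mul_assoc _ _ _, ?_⟩,
    ⟨t₁ * s ^ k, by rw [mul_comm t₁ t₂, mul_assoc], ?_⟩⟩
  · exact isDominant_mul_pow α hmul hsα hsβ t₂ (Nat.le_add_left _ _)
  · exact isDominant_mul_pow α hmul hsα hsβ t₁ (Nat.le_add_right _ _)

end RightFiltered

open RightFiltered in
theorem stmt14_general (T : Type*) [CommMonoid T] (Φ : Type*) (α : Φ)
    (m : T → Φ → ℕ)
    (hmul : ∀ t u β, m (t * u) β = m t β + m u β)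
    (sbar : T) (hsα : m sbar α = 0) (hsβ : ∀ β, β ≠ α → 0 < m sbar β) :
    let le : T → T → Prop := fun t₁ t₂ => ∃ u, t₂ = t₁ * u ∧ ∀ β, m u α ≤ m u β
    Reflexive le ∧ Transitive le ∧ ∀ t₁ t₂, ∃ t₃, le t₁ t₃ ∧ le t₂ t₃ :=
  ⟨dominantLE_refl α hmul, fun _ _ _ => DominantLE.trans α hmul,
    exists_dominantLE_and_dominantLE α hmul hsα hsβ⟩

/-- Abstract version of Lemma `rightfilt`: given a commutative monoid `T₊` with a monoid
homomorphism `t ↦ (m(β,t))_β` to `ℕ^{Φ⁺}`, the relation `t₁ ≤_α t₂ ⇔ ∃ u, t₂ = t₁u` with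
`m(β,u) ≥ m(α,u) ≥ 0` for all `β`, is a reflexive transitive relation which is right
filtered, provided there is `s̄` with `m(α,s̄) = 0` and `m(β,s̄) > 0` for all `β ≠ α`. -/
theorem stmt14 (T : Type*) [CommMonoid T] (Φ : Type*) [Fintype Φ] (α : Φ)
    (m : T → Φ → ℕ) (hm1 : ∀ β, m 1 β = 0)
    (hmul : ∀ t u β, m (t * u) β = m t β + m u β)
    (sbar : T) (hsα : m sbar α = 0) (hsβ : ∀ β, β ≠ α → 0 < m sbar β) :
    let le : T → T → Prop := fun t₁ t₂ => ∃ u, t₂ = t₁ * u ∧ ∀ β, m u α ≤ m u β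
    Reflexive le ∧ Transitive le ∧ ∀ t₁ t₂, ∃ t₃, le t₁ t₃ ∧ le t₂ t₃ :=
  stmt14_general T Φ α m hmul sbar hsα hsβ
end
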